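/- Let P and Q be complementary orthogonal projectors on ℝᴺ (P + Q = I, PQ = 0, both symmetric), and let Z be an invertible matrix. Define α = ‖PZ‖₂ > 0 and β = ‖QZ‖₂ > 0, and M := P/α + Q/β. Then M is symmetric positive definite, ‖MZ‖₂ ≤ 2, and M is invertible with M⁻¹ = αP + βQ. -/

import Mathlib

/-! Complementary orthogonal projectors are orthogonal idempotents, so combinations `a P + b Q`
multiply coefficientwise; this gives `M⁻¹ = α P + β Q`. Both projectors are positive semidefinite
and sum to `1`, so `M ≥ min α⁻¹ β⁻¹ • 1` is positive definite. Finally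
`M Z = ‖PZ‖⁻¹ (PZ) + ‖QZ‖⁻¹ (QZ)` is a sum of two matrices of norm at most one. -/

open Matrix
open scoped Matrix.Norms.L2Operator ComplexOrder

theorem Commute.of_add_eq_one {R : Type*} [Ring R] {p q : R} (h : p + q = 1) : Commute p q := by
  rw [eq_sub_of_add_eq' h]
  exact (Commute.one_right p).sub_right (Commute.refl p)

theorem smul_add_smul_mul_smul_add_smul {R A : Type*} [CommSemiring R] [Semiring A] [Algebra R A]
    {p q : A} (hp : IsIdempotentElem p) (hq : IsIdempotentElem q) (hpq : p * q = 0)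
    (hqp : q * p = 0) (a b c d : R) :
    (a • p + b • q) * (c • p + d • q) = (a * c) • p + (b * d) • q := by
  simp only [add_mul, mul_add, smul_mul_smul, hp.eq, hq.eq, hpq, hqp, smul_zero, add_zero,
    zero_add]

theorem norm_inv_norm_smul_le_one {E : Type*} [SeminormedAddCommGroup E] [NormedSpace ℝ E]
    (x : E) : ‖‖x‖⁻¹ • x‖ ≤ 1 := by
  rw [norm_smul, norm_inv, norm_norm]
  exact inv_mul_le_one_of_le₀ le_rfl (norm_nonneg x)

namespace Matrix

variable {n 𝕜 : Type*} [RCLike 𝕜]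

theorem PosSemidef.of_isStarProjection [Fintype n] {P : Matrix n n 𝕜} (hP : IsStarProjection P) :
    P.PosSemidef := by
  simpa only [← star_eq_conjTranspose, hP.isSelfAdjoint.star_eq, hP.isIdempotentElem.eq]
    using posSemidef_conjTranspose_mul_self P

theorem PosDef.smul_add_smul_of_add_eq_one [DecidableEq n] {P Q : Matrix n n 𝕜}
    (hP : P.PosSemidef) (hQ : Q.PosSemidef) (hPQ : P + Q = 1) {a b : ℝ} (ha : 0 < a)
    (hb : 0 < b) : (a • P + b • Q).PosDef := by
  set c := min a b
  have hsplit : a • P + b • Q = c • (1 : Matrix n n 𝕜) + ((a - c) • P + (b - c) • Q) := by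
    rw [← hPQ]
    module
  rw [hsplit]
  exact (PosDef.one.smul (lt_min ha hb)).add_posSemidef
    ((hP.smul (sub_nonneg.2 (min_le_left a b))).add (hQ.smul (sub_nonneg.2 (min_le_right a b))))

end Matrix

theorem stmt13_general {N : ℕ} (P Q Z : Matrix (Fin N) (Fin N) ℝ)
    (hPQ : P + Q = 1) (hPQ0 : P * Q = 0)
    (hPsym : Pᵀ = P) (hQsym : Qᵀ = Q) (hPproj : P * P = P) (hQproj : Q * Q = Q)
    (hα : 0 < ‖P * Z‖) (hβ : 0 < ‖Q * Z‖) :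
    let α := ‖P * Z‖
    let β := ‖Q * Z‖
    let M := α⁻¹ • P + β⁻¹ • Q
    M.PosDef ∧ ‖M * Z‖ ≤ 2 ∧ M * (α • P + β • Q) = 1 ∧ (α • P + β • Q) * M = 1 := by
  intro α β M
  have hP : IsStarProjection P := ⟨hPproj, hPsym⟩
  have hQ : IsStarProjection Q := ⟨hQproj, hQsym⟩
  have hmul := smul_add_smul_mul_smul_add_smul (R := ℝ) hPproj hQproj hPQ0
    ((Commute.of_add_eq_one hPQ).eq ▸ hPQ0)
  refine ⟨?_, ?_, ?_, ?_⟩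
  · exact .smul_add_smul_of_add_eq_one (.of_isStarProjection hP) (.of_isStarProjection hQ) hPQ
      (inv_pos.2 hα) (inv_pos.2 hβ)
  · calc ‖M * Z‖ = ‖α⁻¹ • (P * Z) + β⁻¹ • (Q * Z)‖ := by simp only [M, add_mul, smul_mul]
      _ ≤ 1 + 1 := (norm_add_le _ _).trans
          (add_le_add (norm_inv_norm_smul_le_one _) (norm_inv_norm_smul_le_one _))
      _ = 2 := one_add_one_eq_two
  · rw [hmul, inv_mul_cancel₀ hα.ne', inv_mul_cancel₀ hβ.ne', one_smul, one_smul, hPQ]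
  · rw [hmul, mul_inv_cancel₀ hα.ne', mul_inv_cancel₀ hβ.ne', one_smul, one_smul, hPQ]

/-- The norm-balancing preconditioner `M = P/α + Q/β` with `α = ‖PZ‖₂`, `β = ‖QZ‖₂`,
for complementary orthogonal projectors `P, Q` and invertible `Z`: `M` is SPD,
`‖MZ‖₂ ≤ 2`, and `M⁻¹ = αP + βQ`. -/
theorem stmt13 {N : ℕ} (P Q Z : Matrix (Fin N) (Fin N) ℝ)
    (hPQ : P + Q = 1) (hPQ0 : P * Q = 0)
    (hPsym : Pᵀ = P) (hQsym : Qᵀ = Q) (hPproj : P * P = P) (hQproj : Q * Q = Q)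
    (hZ : IsUnit Z)
    (hα : 0 < ‖P * Z‖) (hβ : 0 < ‖Q * Z‖) :
    let α := ‖P * Z‖
    let β := ‖Q * Z‖
    let M := α⁻¹ • P + β⁻¹ • Q
    M.PosDef ∧ ‖M * Z‖ ≤ 2 ∧ M * (α • P + β • Q) = 1 ∧ (α • P + β • Q) * M = 1 :=
  stmt13_general P Q Z hPQ hPQ0 hPsym hQsym hPproj hQproj hα hβ
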